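/- Let 3/2<p<3, a,b>0, q = p+2p^2/3, and suppose c > (b|Q|_p^{2p^2/3}/2)^{3/(2p^2-3p)}. Then i(c) = -∞, i.e., the energy I(u) = (a/p)|∇u|_p^p + (b/(2p))|∇u|_p^{2p} - (1/q)|u|_q^q is unbounded below on the constraint S(c) = {u ∈ W^{1,p}(ℝ^3) : |u|_p = c}. -/

import Mathlib

open MeasureTheory Real Set Filter

noncomputable section

abbrev E3 := EuclideanSpace ℝ (Fin 3)

def gradPow (p : ℝ) (u : E3 → ℝ) : ℝ := ∫ x : E3, ‖fderiv ℝ u x‖ ^ p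
def lpPow (s : ℝ) (u : E3 → ℝ) : ℝ := ∫ x : E3, |u x| ^ s
def Wmem (p : ℝ) (u : E3 → ℝ) : Prop :=
  Differentiable ℝ u ∧ MeasureTheory.Integrable (fun x : E3 => |u x| ^ p) ∧
    MeasureTheory.Integrable (fun x : E3 => ‖fderiv ℝ u x‖ ^ p)
def Ifun (a b p q : ℝ) (u : E3 → ℝ) : ℝ :=
  a / p * gradPow p u + b / (2 * p) * (gradPow p u) ^ 2 - 1 / q * lpPow q u
def Sset (p c : ℝ) : Set (E3 → ℝ) := {u | Wmem p u ∧ lpPow p u = c ^ p}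
def ifun (a b p q c : ℝ) : ℝ := sInf (Ifun a b p q '' Sset p c)

/-! Along the mass-preserving dilations `Q_t(x) = k t^{3/p} Q(t x)`, `k = c / |Q|_p`, the three terms
of the energy scale like `t^p`, `t^{2p}` and `t^{2p}`, so `I(Q_t) = A t^p + B t^{2p}`. The identities
`|∇Q|_p^p = |Q|_p^p = (p/q) |Q|_q^q` make `B = (b/(2p)) c^{2p} - (1/p) k^q |Q|_p^p`, and the mass
threshold on `c` is exactly the condition `B < 0`; hence `I(Q_t) → -∞` as `t → ∞`. -/

lemma fderiv_const_mul_comp_smul {E : Type*} [NormedAddCommGroup E] [NormedSpace ℝ E]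
    (f : E → ℝ) (K t : ℝ) (x : E) :
    fderiv ℝ (fun y => K * f (t • y)) x = (K * t) • fderiv ℝ f (t • x) := by
  change fderiv ℝ (K • fun y => f (t • y)) x = _
  rw [fderiv_const_smul_field, Pi.smul_apply, fderiv_comp_smul, smul_smul]

lemma integral_comp_smul_euclideanSpace {n : ℕ} (g : EuclideanSpace ℝ (Fin n) → ℝ) {t : ℝ}
    (ht : 0 ≤ t) : ∫ x, g (t • x) = (t ^ n)⁻¹ * ∫ x, g x := by
  rw [Measure.integral_comp_smul_of_nonneg volume g t (hR := ht), finrank_euclideanSpace_fin,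
    smul_eq_mul]

section Scaling

variable {t : ℝ} (Q : E3 → ℝ)

lemma lpPow_const_mul_comp_smul (s K : ℝ) (ht : 0 ≤ t) :
    lpPow s (fun x => K * Q (t • x)) = |K| ^ s * (t ^ 3)⁻¹ * lpPow s Q := by
  simp only [lpPow, abs_mul, mul_rpow (abs_nonneg _) (abs_nonneg _)]
  rw [integral_const_mul, integral_comp_smul_euclideanSpace (fun y => |Q y| ^ s) ht]
  ring

lemma gradPow_const_mul_comp_smul (p K : ℝ) (ht : 0 ≤ t) :
    gradPow p (fun x => K * Q (t • x)) = |K * t| ^ p * (t ^ 3)⁻¹ * gradPow p Q := by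
  simp only [gradPow, fderiv_const_mul_comp_smul, norm_smul, norm_eq_abs,
    mul_rpow (abs_nonneg _) (norm_nonneg _)]
  rw [integral_const_mul, integral_comp_smul_euclideanSpace (fun y => ‖fderiv ℝ Q y‖ ^ p) ht]
  ring

variable {Q}

lemma Wmem.const_mul_comp_smul {p : ℝ} (hQ : Wmem p Q) (K : ℝ) (ht : t ≠ 0) :
    Wmem p (fun x => K * Q (t • x)) := by
  obtain ⟨hdiff, hint, hgrad⟩ := hQ
  refine ⟨(hdiff.comp (differentiable_id.const_smul t)).const_mul K, ?_, ?_⟩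
  · simp only [abs_mul, mul_rpow (abs_nonneg _) (abs_nonneg _)]
    exact (hint.comp_smul ht).const_mul _
  · simp only [fderiv_const_mul_comp_smul, norm_smul, norm_eq_abs,
      mul_rpow (abs_nonneg _) (norm_nonneg _)]
    exact (hgrad.comp_smul ht).const_mul _

end Scaling

section Dilation

variable {p k t : ℝ} (Q : E3 → ℝ)

lemma lpPow_dilation (s : ℝ) (hk : 0 ≤ k) (ht : 0 < t) :
    lpPow s (fun x => k * t ^ (3 / p) * Q (t • x)) = k ^ s * t ^ (3 * s / p - 3) * lpPow s Q := by
  have hK : 0 ≤ k * t ^ (3 / p) := by positivity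
  rw [lpPow_const_mul_comp_smul Q s _ ht.le, abs_of_nonneg hK, mul_rpow hk (by positivity),
    ← rpow_mul ht.le, rpow_sub ht, ← rpow_natCast t 3]
  field_simp
  push_cast
  ring_nf

lemma gradPow_dilation (hp : 0 < p) (hk : 0 ≤ k) (ht : 0 < t) :
    gradPow p (fun x => k * t ^ (3 / p) * Q (t • x)) = k ^ p * t ^ p * gradPow p Q := by
  have hK : 0 ≤ k * t ^ (3 / p) * t := by positivity
  rw [gradPow_const_mul_comp_smul Q p _ ht.le, abs_of_nonneg hK, mul_rpow (by positivity) ht.le,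
    mul_rpow hk (by positivity), ← rpow_mul ht.le, div_mul_cancel₀ _ hp.ne', ← rpow_natCast t 3]
  field_simp
  push_cast
  ring

lemma Ifun_dilation (a b q : ℝ) (hp : 0 < p) (hq : q = p + 2 * p ^ 2 / 3) (hk : 0 ≤ k)
    (ht : 0 < t) (hQgrad : gradPow p Q = lpPow p Q) (hQq : lpPow q Q = q / p * lpPow p Q) :
    Ifun a b p q (fun x => k * t ^ (3 / p) * Q (t • x)) =
      a / p * (k ^ p * lpPow p Q) * t ^ p
        + (b / (2 * p) * (k ^ p * lpPow p Q) ^ 2 - 1 / p * (k ^ q * lpPow p Q)) * (t ^ p) ^ 2 := by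
  have hq0 : q ≠ 0 := by rw [hq]; positivity
  have hexp : 3 * q / p - 3 = p * 2 := by rw [hq]; field_simp; ring
  rw [Ifun, gradPow_dilation Q hp hk ht, lpPow_dilation Q q hk ht, hQgrad, hQq, hexp,
    rpow_mul ht.le, rpow_two]
  field_simp
  ring

end Dilation

lemma div_rpow_one_div_rpow_mul {c L : ℝ} (p : ℝ) (hp : p ≠ 0) (hc : 0 ≤ c) (hL : 0 < L) :
    (c / L ^ (1 / p)) ^ p * L = c ^ p := by
  rw [div_rpow hc (by positivity), ← rpow_mul hL.le, one_div_mul_cancel hp, rpow_one,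
    div_mul_cancel₀ _ hL.ne']

/-- The mass threshold of the theorem, rewritten as the negativity of the coefficient of
`t^{2p}` in `I(Q_t)`. -/
lemma half_mul_sq_lt_of_threshold_lt {b p q L c : ℝ} (hb : 0 ≤ b) (hp : 3 / 2 < p)
    (hq : q = p + 2 * p ^ 2 / 3) (hL : 0 < L)
    (hc : (b * (L ^ (1 / p)) ^ (2 * p ^ 2 / 3) / 2) ^ (3 / (2 * p ^ 2 - 3 * p)) < c) :
    b / 2 * (c ^ p) ^ 2 < (c / L ^ (1 / p)) ^ q * L := by
  set m := L ^ (1 / p)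
  have hm : 0 < m := by positivity
  have hD : 0 ≤ b * m ^ (2 * p ^ 2 / 3) / 2 := by positivity
  have hc0 : 0 < c := (rpow_nonneg hD _).trans_lt hc
  have hmL : m ^ p = L := by
    rw [← rpow_mul hL.le, one_div_mul_cancel (by linarith), rpow_one]
  have hthreshold : b * m ^ (q - p) / 2 < c ^ (q - 2 * p) := by
    have hpos : 0 < q - 2 * p := by rw [hq]; nlinarith
    have := rpow_lt_rpow (rpow_nonneg hD _) hc hpos
    rwa [← rpow_mul hD, show 3 / (2 * p ^ 2 - 3 * p) * (q - 2 * p) = 1 by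
      rw [hq, div_mul_eq_mul_div, div_eq_one_iff_eq (by nlinarith)]; ring,
      rpow_one, ← show q - p = 2 * p ^ 2 / 3 by rw [hq]; ring] at this
  calc b / 2 * (c ^ p) ^ 2 = b / 2 * (c ^ p) ^ 2 * (m ^ (q - p) * m ^ (p - q)) := by
        rw [← rpow_add hm, show q - p + (p - q) = 0 by ring, rpow_zero, mul_one]
    _ = b * m ^ (q - p) / 2 * (c ^ (2 * p) * m ^ (p - q)) := by
        rw [mul_comm 2 p, rpow_mul hc0.le, rpow_two]
        ring
    _ < c ^ (q - 2 * p) * (c ^ (2 * p) * m ^ (p - q)) := by gcongr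
    _ = (c / m) ^ q * L := by
        rw [← mul_assoc, ← rpow_add hc0, div_rpow hc0.le hm.le, ← hmL, rpow_sub hm]
        ring_nf

lemma tendsto_mul_add_mul_sq_atBot {A B : ℝ} (hB : B < 0) :
    Tendsto (fun s => A * s + B * s ^ 2) atTop atBot := by
  have h := tendsto_id.atTop_mul_atBot₀
    (tendsto_atBot_add_const_left _ A (tendsto_id.const_mul_atTop_of_neg hB))
  exact h.congr fun s => by simp only [id]; ring

theorem stmt8 (a b p q c : ℝ) (Q : E3 → ℝ) (hb : 0 < b)
    (hp1 : 3/2 < p) (hq : q = p + 2*p^2/3)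
    (hQ : Wmem p Q) (hQpos : 0 < lpPow p Q)
    (hQgrad : gradPow p Q = lpPow p Q)
    (hQq : lpPow q Q = q/p * lpPow p Q)
    (hc : (b * ((lpPow p Q) ^ (1/p)) ^ (2*p^2/3) / 2) ^ (3/(2*p^2 - 3*p)) < c) :
    ¬ BddBelow (Ifun a b p q '' Sset p c) := by
  rintro ⟨M, hM⟩
  have hp : 0 < p := by linarith
  set k := c / lpPow p Q ^ (1 / p)
  have hc0 : 0 < c := (rpow_nonneg (by positivity) _).trans_lt hc
  have hk : 0 ≤ k := by positivity
  have hmass : k ^ p * lpPow p Q = c ^ p := div_rpow_one_div_rpow_mul p hp.ne' hc0.le hQpos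
  have hB : b / (2 * p) * (c ^ p) ^ 2 - 1 / p * (k ^ q * lpPow p Q) < 0 := by
    have := half_mul_sq_lt_of_threshold_lt hb.le hp1 hq hQpos hc
    rw [show b / (2 * p) * (c ^ p) ^ 2 - 1 / p * (k ^ q * lpPow p Q)
      = (b / 2 * (c ^ p) ^ 2 - k ^ q * lpPow p Q) / p by ring]
    exact div_neg_of_neg_of_pos (by linarith) hp
  obtain ⟨t, hlt, ht⟩ := (((tendsto_mul_add_mul_sq_atBot (A := a / p * c ^ p) hB).comp
    (tendsto_rpow_atTop hp)).eventually (eventually_lt_atBot M)).and (eventually_gt_atTop 0)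
    |>.exists
  have hmem : (fun x => k * t ^ (3 / p) * Q (t • x)) ∈ Sset p c := by
    refine ⟨hQ.const_mul_comp_smul _ ht.ne', ?_⟩
    rw [lpPow_dilation Q p hk ht, mul_div_cancel_right₀ _ hp.ne', sub_self, rpow_zero,
      mul_one, hmass]
  have hI := hM (mem_image_of_mem _ hmem)
  rw [Ifun_dilation Q a b q hp hq hk ht hQgrad hQq, hmass] at hI
  exact (hI.trans_lt hlt).false
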